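/- arXiv:2104.12006 — 2 statements merged into one kernel-verified Lean document; each statement's English description precedes it below -/
import Mathlib

section
/- Let (ξ_i) be i.i.d. ℕ-valued random variables with s_n := ξ₁ + … + ξ_n, u(n) := Σ_{k=1}^n P(s_k = n) and a(n) := Σ_{k=1}^n u(k). Suppose ℓ(t) := E[ξ ∧ t] is slowly varying. Then a(n) ∼ n/ℓ(n) as n → ∞. -/
/-!
Write `T(t) = P(ξ > t)` and `U(m) = ∑ᵣ P(sᵣ = m)`, so that `∑_{m ≤ n} U(m) = 1 + a(n)`.
Splitting according to the last renewal epoch `m ≤ n` gives `∑_{m ≤ n} U(m) T(n - m) = 1`; summing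
over `n < N` and using `ℓ(k) = ∑_{t < k} T(t)` yields `N = ∑_{m < N} U(m) ℓ(N - m)`. As `ℓ` is
nondecreasing, this gives `N ≤ ℓ(N) (1 + a(N))` and `ℓ(K) (1 + a(n)) ≤ n + K`. Taking `K ≈ εn`,
slow variation turns these into `(1 + a(n)) ℓ(n) / n → 1`, and the `1` is absorbed because
`ℓ(n) / n`, a Cesàro mean of `T`, tends to `0`.
-/

open Filter Topology Finset

lemma Finset.sum_range_succ_eq_add_sum_Icc {M : Type*} [AddCommMonoid M] (g : ℕ → M) (n : ℕ) :
    ∑ m ∈ range (n + 1), g m = g 0 + ∑ m ∈ Icc 1 n, g m := by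
  have h : range (n + 1) = insert 0 (Icc 1 n) := by ext; simp; omega
  rw [h, sum_insert (by simp)]

section SlowVariation

variable {ℓ : ℝ → ℝ} {A : ℕ → ℝ}

lemma mul_div_le_of_mul_le (hmono : MonotoneOn ℓ (Set.Ici 0))
    (hupp : ∀ n K : ℕ, ℓ K * A n ≤ n + K) {ε : ℝ} (hε : 0 < ε) {n : ℕ} (hn : 0 < n)
    (hA : 0 ≤ A n) (hℓn : 0 ≤ ℓ n) (hℓε : 0 < ℓ (ε * n)) :
    A n * ℓ n / n ≤ ℓ n / ℓ (ε * n) * (1 + ε + 1 / n) := by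
  have hεn : 0 ≤ ε * n := by positivity
  have hK : ℓ (ε * n) * A n ≤ n + (ε * n + 1) :=
    calc ℓ (ε * n) * A n ≤ ℓ ⌈ε * n⌉₊ * A n :=
          mul_le_mul_of_nonneg_right
            (hmono hεn (Set.mem_Ici.2 (Nat.cast_nonneg _)) (Nat.le_ceil _)) hA
      _ ≤ n + ⌈ε * n⌉₊ := hupp n _
      _ ≤ n + (ε * n + 1) := by linarith [Nat.ceil_lt_add_one hεn]
  have hn' : (0 : ℝ) < n := Nat.cast_pos.2 hn
  rw [div_mul_eq_mul_div, div_le_div_iff₀ hn' hℓε]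
  have hscale : (1 + ε + 1 / n) * n = n + (ε * n + 1) := by field_simp; ring
  calc A n * ℓ n * ℓ (ε * n) = ℓ n * (ℓ (ε * n) * A n) := by ring
    _ ≤ ℓ n * (n + (ε * n + 1)) := mul_le_mul_of_nonneg_left hK hℓn
    _ = ℓ n * (1 + ε + 1 / n) * n := by rw [mul_assoc, hscale]

theorem tendsto_mul_div_of_slowlyVarying (hmono : MonotoneOn ℓ (Set.Ici 0))
    (hpos : ∀ᶠ t in atTop, 0 < ℓ t)
    (hslow : ∀ lam > 0, Tendsto (fun t => ℓ (lam * t) / ℓ t) atTop (𝓝 1))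
    (hlow : ∀ n : ℕ, (n : ℝ) ≤ ℓ n * A n) (hupp : ∀ n K : ℕ, ℓ K * A n ≤ n + K) :
    Tendsto (fun n : ℕ => A n * ℓ n / n) atTop (𝓝 1) := by
  have hn : Tendsto (fun n : ℕ => (n : ℝ)) atTop atTop := tendsto_natCast_atTop_atTop
  have hℓpos : ∀ᶠ n : ℕ in atTop, 0 < ℓ n := hn.eventually hpos
  have hA : ∀ᶠ n : ℕ in atTop, 0 ≤ A n := hℓpos.mono fun n h =>
    nonneg_of_mul_nonneg_right ((Nat.cast_nonneg n).trans (hlow n)) h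
  have hlower : ∀ᶠ n : ℕ in atTop, 1 ≤ A n * ℓ n / n := by
    filter_upwards [eventually_gt_atTop 0] with n hn0
    rw [le_div_iff₀ (Nat.cast_pos.2 hn0), one_mul, mul_comm]
    exact hlow n
  refine tendsto_order.2 ⟨fun c hc => hlower.mono fun n h => hc.trans_le h, fun b hb => ?_⟩
  obtain ⟨ε, hε, hεb⟩ : ∃ ε : ℝ, 0 < ε ∧ 1 + ε < b := ⟨(b - 1) / 2, by linarith, by linarith⟩
  have hεn : Tendsto (fun n : ℕ => ε * n) atTop atTop := hn.const_mul_atTop hε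
  have hratio : Tendsto (fun n : ℕ => ℓ n / ℓ (ε * n) * (1 + ε + 1 / n)) atTop (𝓝 (1 + ε)) := by
    have h1 : Tendsto (fun n : ℕ => ℓ n / ℓ (ε * n)) atTop (𝓝 1) :=
      ((hslow ε⁻¹ (inv_pos.2 hε)).comp hεn).congr fun n => by
        simp [inv_mul_cancel_left₀ hε.ne']
    simpa using h1.mul (tendsto_const_nhds.add tendsto_one_div_atTop_nhds_zero_nat)
  filter_upwards [hratio.eventually (eventually_lt_nhds hεb),
    eventually_gt_atTop 0, hA, hℓpos, hεn.eventually hpos] with n hlt hn0 hAn hℓn hℓε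
  exact (mul_div_le_of_mul_le hmono hupp hε hn0 hAn hℓn.le hℓε).trans_lt hlt

end SlowVariation

namespace Renewal

variable {f : ℕ → ℝ}

noncomputable def convPow (f : ℕ → ℝ) : ℕ → ℕ → ℝ
  | 0, n => if n = 0 then 1 else 0
  | r + 1, n => ∑ k ∈ range (n + 1), f k * convPow f r (n - k)

lemma convPow_zero (n : ℕ) : convPow f 0 n = if n = 0 then 1 else 0 := rfl

lemma convPow_succ (r n : ℕ) :
    convPow f (r + 1) n = ∑ k ∈ range (n + 1), f k * convPow f r (n - k) := rfl

lemma eq_convPow {F : ℕ → ℕ → ℝ} (h0 : ∀ n, F 0 n = if n = 0 then 1 else 0)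
    (hsucc : ∀ r n, F (r + 1) n = ∑ k ∈ range (n + 1), f k * F r (n - k)) : F = convPow f := by
  funext r n
  induction r generalizing n with
  | zero => exact h0 n
  | succ r ih => simp only [hsucc, convPow_succ, ih]

lemma convPow_nonneg (hf : ∀ k, 0 ≤ f k) (r n : ℕ) : 0 ≤ convPow f r n := by
  induction r generalizing n with
  | zero => rw [convPow_zero]; positivity
  | succ r ih => exact sum_nonneg fun k _ => mul_nonneg (hf k) (ih _)

lemma convPow_eq_zero_of_lt (hf0 : f 0 = 0) {r n : ℕ} (h : n < r) : convPow f r n = 0 := by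
  induction r generalizing n with
  | zero => omega
  | succ r ih =>
    refine sum_eq_zero fun k hk => ?_
    rcases Nat.eq_zero_or_pos k with rfl | hk0
    · rw [hf0, zero_mul]
    · rw [ih (by grind), mul_zero]

lemma convPow_succ' (r n : ℕ) :
    convPow f (r + 1) n = ∑ k ∈ range (n + 1), convPow f r k * f (n - k) := by
  rw [convPow_succ, ← sum_range_reflect]
  refine sum_congr rfl fun k hk => ?_
  rw [mul_comm, Nat.add_sub_cancel, Nat.sub_sub_self (by grind)]

/-- `tail f t = P(ξ > t)` when `f` is the law of `ξ`. -/
def tail (f : ℕ → ℝ) (t : ℕ) : ℝ := 1 - ∑ j ∈ range (t + 1), f j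

lemma sum_range_convPow_succ (r n : ℕ) :
    ∑ m ∈ range (n + 1), convPow f (r + 1) m
      = ∑ k ∈ range (n + 1), convPow f r k * (1 - tail f (n - k)) := by
  simp only [convPow_succ', tail, sub_sub_cancel, mul_sum]
  rw [sum_range_diag_flip (n + 1) fun k i => convPow f r k * f i]
  refine sum_congr rfl fun k hk => ?_
  rw [Nat.sub_add_comm (by grind)]

lemma sum_convPow_mul_tail (r n : ℕ) :
    ∑ m ∈ range (n + 1), convPow f r m * tail f (n - m)
      = ∑ m ∈ range (n + 1), convPow f r m - ∑ m ∈ range (n + 1), convPow f (r + 1) m := by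
  rw [sum_range_convPow_succ, ← sum_sub_distrib]
  exact sum_congr rfl fun _ _ => by ring

noncomputable def renewal (f : ℕ → ℝ) (m : ℕ) : ℝ := ∑ r ∈ range (m + 1), convPow f r m

lemma renewal_nonneg (hf : ∀ k, 0 ≤ f k) (m : ℕ) : 0 ≤ renewal f m :=
  sum_nonneg fun r _ => convPow_nonneg hf r m

lemma renewal_eq_sum_convPow (hf0 : f 0 = 0) {m n : ℕ} (h : m ≤ n) :
    renewal f m = ∑ r ∈ range (n + 1), convPow f r m :=
  sum_subset (range_subset_range.2 (by omega)) fun r hr hr' =>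
    convPow_eq_zero_of_lt hf0 (by simp only [mem_range] at hr hr'; omega)

lemma sum_renewal_mul_tail (hf0 : f 0 = 0) (n : ℕ) :
    ∑ m ∈ range (n + 1), renewal f m * tail f (n - m) = 1 := by
  set G : ℕ → ℝ := fun r => ∑ m ∈ range (n + 1), convPow f r m
  calc ∑ m ∈ range (n + 1), renewal f m * tail f (n - m)
      = ∑ r ∈ range (n + 1), ∑ m ∈ range (n + 1), convPow f r m * tail f (n - m) := by
        rw [sum_comm]
        refine sum_congr rfl fun m hm => ?_
        rw [renewal_eq_sum_convPow hf0 (Nat.lt_succ_iff.1 (mem_range.1 hm)), sum_mul]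
    _ = ∑ r ∈ range (n + 1), (G r - G (r + 1)) := sum_congr rfl fun r _ => sum_convPow_mul_tail r n
    _ = G 0 - G (n + 1) := sum_range_sub' G (n + 1)
    _ = 1 := by
        have hG : G (n + 1) = 0 :=
          sum_eq_zero fun m hm => convPow_eq_zero_of_lt hf0 (by simpa using mem_range.1 hm)
        simp [G, hG, convPow_zero]

lemma natCast_eq_sum_renewal_mul_sum_tail (hf0 : f 0 = 0) (N : ℕ) :
    (N : ℝ) = ∑ m ∈ range N, renewal f m * ∑ t ∈ range (N - m), tail f t := by
  calc (N : ℝ) = ∑ n ∈ range N, ∑ m ∈ range (n + 1), renewal f m * tail f (n - m) := by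
        simp [sum_renewal_mul_tail hf0]
    _ = _ := by
        simp only [mul_sum]
        exact sum_range_diag_flip N fun m t => renewal f m * tail f t

lemma tail_nonneg (hf : ∀ k, 0 ≤ f k) (hf1 : HasSum f 1) (t : ℕ) : 0 ≤ tail f t :=
  sub_nonneg.2 (sum_le_hasSum _ (fun j _ => hf j) hf1)

lemma tendsto_tail (hf1 : HasSum f 1) : Tendsto (tail f) atTop (𝓝 0) := by
  unfold tail
  simpa using (tendsto_const_nhds (x := (1 : ℝ))).sub
    (hf1.tendsto_sum_nat.comp (tendsto_add_atTop_nat 1))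

lemma hasSum_ite_lt (hf1 : HasSum f 1) (t : ℕ) :
    HasSum (fun j => if t < j then f j else 0) (tail f t) := by
  have hfin : HasSum (fun j => if j < t + 1 then f j else 0) (∑ j ∈ range (t + 1), f j) := by
    have h : HasSum (fun j => if j < t + 1 then f j else 0)
        (∑ j ∈ range (t + 1), if j < t + 1 then f j else 0) :=
      hasSum_sum_of_ne_finset_zero fun j hj => by simp_all
    rwa [sum_congr rfl fun j hj => if_pos (mem_range.1 hj)] at h
  refine (hf1.sub hfin).congr_fun fun j => ?_
  split_ifs <;> first | omega | ring

noncomputable def truncMean (f : ℕ → ℝ) (t : ℝ) : ℝ := ∑' j : ℕ, f j * min (j : ℝ) t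

lemma truncMean_natCast (hf1 : HasSum f 1) (k : ℕ) :
    truncMean f k = ∑ t ∈ range k, tail f t := by
  have hmin (j : ℕ) : f j * min (j : ℝ) k = ∑ t ∈ range k, if t < j then f j else 0 := by
    have h : (range k).filter (· < j) = range (min j k) := by ext; simp; omega
    rw [sum_ite, h, sum_const_zero, add_zero, sum_const, card_range, nsmul_eq_mul, mul_comm,
      Nat.cast_min]
  simp only [truncMean, hmin]
  exact (hasSum_sum fun t _ => hasSum_ite_lt hf1 t).tsum_eq

lemma truncMean_monotoneOn (hf : ∀ k, 0 ≤ f k) (hf1 : HasSum f 1) :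
    MonotoneOn (truncMean f) (Set.Ici 0) := by
  have hsumm {t : ℝ} (ht : 0 ≤ t) : Summable fun j : ℕ => f j * min (j : ℝ) t :=
    (hf1.summable.mul_right t).of_nonneg_of_le
      (fun j => mul_nonneg (hf j) (le_min j.cast_nonneg ht))
      (fun j => mul_le_mul_of_nonneg_left (min_le_right _ _) (hf j))
  intro s hs t ht hst
  exact (hsumm hs).tsum_le_tsum
    (fun j => mul_le_mul_of_nonneg_left (min_le_min le_rfl hst) (hf j)) (hsumm ht)

lemma one_le_truncMean (hf0 : f 0 = 0) (hf : ∀ k, 0 ≤ f k) (hf1 : HasSum f 1) {t : ℝ}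
    (ht : 1 ≤ t) : 1 ≤ truncMean f t := by
  have h1 : truncMean f 1 = 1 := by
    simpa [tail, hf0] using truncMean_natCast hf1 1
  exact h1 ▸ truncMean_monotoneOn hf hf1 (Set.mem_Ici.2 zero_le_one)
    (Set.mem_Ici.2 (zero_le_one.trans ht)) ht

lemma tendsto_truncMean_div (hf1 : HasSum f 1) :
    Tendsto (fun n : ℕ => truncMean f n / n) atTop (𝓝 0) :=
  (tendsto_tail hf1).cesaro.congr fun n => by rw [truncMean_natCast hf1, inv_mul_eq_div]

lemma monotone_sum_range_tail (hf : ∀ k, 0 ≤ f k) (hf1 : HasSum f 1) :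
    Monotone fun k => ∑ t ∈ range k, tail f t := fun _ _ h =>
  sum_le_sum_of_subset_of_nonneg (range_subset_range.2 h) fun t _ _ => tail_nonneg hf hf1 t

lemma natCast_le_truncMean_mul_sum_renewal (hf0 : f 0 = 0) (hf : ∀ k, 0 ≤ f k)
    (hf1 : HasSum f 1) (N : ℕ) :
    (N : ℝ) ≤ truncMean f N * ∑ m ∈ range (N + 1), renewal f m := by
  rw [truncMean_natCast hf1, mul_sum]
  calc (N : ℝ) = ∑ m ∈ range N, renewal f m * ∑ t ∈ range (N - m), tail f t :=
        natCast_eq_sum_renewal_mul_sum_tail hf0 N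
    _ ≤ ∑ m ∈ range N, (∑ t ∈ range N, tail f t) * renewal f m :=
        sum_le_sum fun m _ => by
          rw [mul_comm]
          exact mul_le_mul_of_nonneg_right (monotone_sum_range_tail hf hf1 (Nat.sub_le N m))
            (renewal_nonneg hf m)
    _ ≤ ∑ m ∈ range (N + 1), (∑ t ∈ range N, tail f t) * renewal f m :=
        sum_le_sum_of_subset_of_nonneg (range_subset_range.2 N.le_succ) fun m _ _ =>
          mul_nonneg (sum_nonneg fun t _ => tail_nonneg hf hf1 t) (renewal_nonneg hf m)

lemma truncMean_mul_sum_renewal_le (hf0 : f 0 = 0) (hf : ∀ k, 0 ≤ f k) (hf1 : HasSum f 1)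
    (n K : ℕ) : truncMean f K * ∑ m ∈ range (n + 1), renewal f m ≤ n + K := by
  rcases K.eq_zero_or_pos with rfl | hK
  · have h0 : truncMean f 0 = 0 := by simpa using truncMean_natCast hf1 0
    simp [h0]
  rw [truncMean_natCast hf1, mul_sum]
  calc ∑ m ∈ range (n + 1), (∑ t ∈ range K, tail f t) * renewal f m
      ≤ ∑ m ∈ range (n + 1), renewal f m * ∑ t ∈ range (n + K - m), tail f t :=
        sum_le_sum fun m hm => by
          rw [mul_comm]
          exact mul_le_mul_of_nonneg_left
            (monotone_sum_range_tail hf hf1 (by grind)) (renewal_nonneg hf m)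
    _ ≤ ∑ m ∈ range (n + K), renewal f m * ∑ t ∈ range (n + K - m), tail f t :=
        sum_le_sum_of_subset_of_nonneg (range_subset_range.2 (by omega)) fun m _ _ =>
          mul_nonneg (renewal_nonneg hf m) (sum_nonneg fun t _ => tail_nonneg hf hf1 t)
    _ = n + K := by rw [← natCast_eq_sum_renewal_mul_sum_tail hf0, Nat.cast_add]

end Renewal

open Renewal

/-- Renewal-theoretic asymptotics: for i.i.d. `ℕ`-valued `ξᵢ` with distribution `f`
(`F r n = P(s_r = n)` the `r`-fold convolution power), `u(n) := Σ_{k=1}^n P(s_k = n)`,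
`a(n) := Σ_{k=1}^n u(k)`, if `ℓ(t) := E[ξ ∧ t]` is slowly varying then `a(n) ∼ n/ℓ(n)`. -/
theorem stmt10 (f : ℕ → ℝ) (hf0 : f 0 = 0) (hfnn : ∀ k, 0 ≤ f k) (hsum : ∑' k, f k = 1)
    (F : ℕ → ℕ → ℝ) (hF0 : ∀ n, F 0 n = if n = 0 then 1 else 0)
    (hFsucc : ∀ r n, F (r + 1) n = ∑ k ∈ Finset.range (n + 1), f k * F r (n - k))
    (u a : ℕ → ℝ)
    (hu : ∀ n, u n = ∑ k ∈ Finset.Icc 1 n, F k n)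
    (ha : ∀ n, a n = ∑ k ∈ Finset.Icc 1 n, u k)
    (ℓ : ℝ → ℝ) (hℓ : ∀ t, ℓ t = ∑' j : ℕ, f j * min (j : ℝ) t)
    (hslow : ∀ lam > 0, Tendsto (fun t => ℓ (lam * t) / ℓ t) atTop (nhds 1)) :
    Tendsto (fun n : ℕ => a n * ℓ n / n) atTop (nhds 1) := by
  have hf1 : HasSum f 1 := by
    have hs : Summable f := by
      by_contra h
      rw [tsum_eq_zero_of_not_summable h] at hsum
      exact zero_ne_one hsum
    exact hsum ▸ hs.hasSum
  obtain rfl := eq_convPow hF0 hFsucc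
  obtain rfl : ℓ = truncMean f := funext hℓ
  have hsum_renewal (n : ℕ) : ∑ m ∈ range (n + 1), renewal f m = 1 + a n := by
    have hrenewal (m : ℕ) : renewal f m = convPow f 0 m + u m := by
      rw [hu, renewal, sum_range_succ_eq_add_sum_Icc]
    have hu0 : u 0 = 0 := by simp [hu]
    simp [hrenewal, sum_add_distrib, sum_range_succ_eq_add_sum_Icc u, hu0, ha, convPow_zero]
  have key := tendsto_mul_div_of_slowlyVarying (truncMean_monotoneOn hfnn hf1)
    ((eventually_ge_atTop 1).mono fun t ht => one_pos.trans_le (one_le_truncMean hf0 hfnn hf1 ht))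
    hslow (fun n => hsum_renewal n ▸ natCast_le_truncMean_mul_sum_renewal hf0 hfnn hf1 n)
    (fun n K => hsum_renewal n ▸ truncMean_mul_sum_renewal_le hf0 hfnn hf1 n K)
  have h := key.sub (tendsto_truncMean_div hf1)
  rw [sub_zero] at h
  exact h.congr fun n => by ring
end

section
/- For ξ ∈ D_{↑,∞} with ξ(∞-) = ∞, define 𝒟(ξ)(t) := sup{s ≥ t : ξ(s) = ξ(t)}. Then 𝒟(ξ)(t) < ∞ for all t, and 𝒟(ξ) ∈ D_{↑,∞}, i.e. 𝒟(ξ) is non-decreasing and right-continuous. -/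
/-!
Finiteness holds because `ξ` eventually exceeds `ξ t`. For `t ≤ t'`, a point `s ≥ t'` with
`ξ s = ξ t` satisfies `ξ t ≤ ξ t' ≤ ξ s`, so `ξ s = ξ t'`; hence `𝒟(ξ)` is monotone. On
`[t, 𝒟(ξ)(t))` the function `ξ` is constant. For right-continuity at `t`,
if `𝒟(ξ)(t') ≥ b > c > 𝒟(ξ)(t)` for all `t' > t`, then `ξ` would be constant equal to `ξ c` on
`(t, c)`, so by right-continuity of `ξ` also `ξ t = ξ c`, i.e. `c ≤ 𝒟(ξ)(t)`: a contradiction.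
-/

open Set Filter Topology

theorem Monotone.continuousWithinAt_Ici_of_exists_lt {α β : Type*} [LinearOrder α]
    [TopologicalSpace α] [OrderTopology α] [LinearOrder β] [TopologicalSpace β] [OrderTopology β]
    {f : α → β} (hf : Monotone f) {a : α} (h : ∀ b > f a, ∃ c > a, f c < b) :
    ContinuousWithinAt f (Ici a) a := by
  refine tendsto_order.2 ⟨fun b hb => ?_, fun b hb => ?_⟩
  · filter_upwards [self_mem_nhdsWithin] with x hx using hb.trans_le (hf hx)
  · obtain ⟨c, hac, hcb⟩ := h b hb
    filter_upwards [Ico_mem_nhdsGE hac] with x hx using (hf hx.2.le).trans_lt hcb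

section Plateau

variable {α β : Type*} [ConditionallyCompleteLinearOrder α] {ξ : α → β}

def plateau (ξ : α → β) (t : α) : Set α := {s | t ≤ s ∧ ξ s = ξ t}

/-- `𝒟(ξ)(t)` of the paper. -/
noncomputable def plateauEnd (ξ : α → β) (t : α) : α := sSup (plateau ξ t)

theorem self_mem_plateau (t : α) : t ∈ plateau ξ t := ⟨le_rfl, rfl⟩

theorem bddAbove_plateau [Preorder β] [NoMaxOrder β] (htop : Tendsto ξ atTop atTop) (t : α) :
    BddAbove (plateau ξ t) := by
  obtain ⟨M, hM⟩ := eventually_atTop.1 (htop.eventually (eventually_gt_atTop (ξ t)))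
  refine ⟨M, fun s hs => le_of_not_ge fun hMs => ?_⟩
  exact (hM s hMs).ne' hs.2

theorem le_plateauEnd {t : α} (hbdd : BddAbove (plateau ξ t)) : t ≤ plateauEnd ξ t :=
  le_csSup hbdd (self_mem_plateau t)

variable [PartialOrder β]

theorem Monotone.eq_of_lt_plateauEnd (hξ : Monotone ξ) {t s : α} (hts : t ≤ s)
    (hs : s < plateauEnd ξ t) : ξ s = ξ t := by
  obtain ⟨s', hs', hss'⟩ := exists_lt_of_lt_csSup ⟨t, self_mem_plateau t⟩ hs
  exact le_antisymm (hs'.2 ▸ hξ hss'.le) (hξ hts)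

theorem Monotone.monotone_plateauEnd (hξ : Monotone ξ) (hbdd : ∀ t, BddAbove (plateau ξ t)) :
    Monotone (plateauEnd ξ) := by
  intro t t' htt'
  refine csSup_le ⟨t, self_mem_plateau t⟩ fun s hs => ?_
  rcases le_total s t' with hst' | ht's
  · exact hst'.trans (le_plateauEnd (hbdd t'))
  · exact le_csSup (hbdd t') ⟨ht's, le_antisymm (hs.2.le.trans (hξ htt')) (hξ ht's)⟩

variable [TopologicalSpace α] [OrderTopology α] [DenselyOrdered α] [TopologicalSpace β]
  [T2Space β]

theorem Monotone.exists_plateauEnd_lt (hξ : Monotone ξ) {t : α}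
    (hrc : ContinuousWithinAt ξ (Ici t) t) (hbdd : BddAbove (plateau ξ t)) {b : α}
    (hb : plateauEnd ξ t < b) : ∃ t' > t, plateauEnd ξ t' < b := by
  by_contra! h
  obtain ⟨c, hDc, hcb⟩ := exists_between hb
  have htc : t < c := (le_plateauEnd hbdd).trans_lt hDc
  have hconst : ∀ t' ∈ Ioo t c, ξ t' = ξ c := fun t' ht' =>
    (hξ.eq_of_lt_plateauEnd ht'.2.le (hcb.trans_le (h t' ht'.1))).symm
  have : (𝓝[>] t).NeBot := nhdsGT_neBot_of_exists_gt ⟨c, htc⟩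
  have hlim : Tendsto ξ (𝓝[>] t) (𝓝 (ξ c)) :=
    tendsto_const_nhds.congr' <| eventuallyEq_of_mem (Ioo_mem_nhdsGT htc) fun t' ht' =>
      (hconst t' ht').symm
  have hξc : ξ c = ξ t := tendsto_nhds_unique hlim (hrc.mono Ioi_subset_Ici_self)
  exact hDc.not_ge (le_csSup hbdd ⟨htc.le, hξc⟩)

theorem Monotone.continuousWithinAt_plateauEnd (hξ : Monotone ξ)
    (hrc : ∀ t, ContinuousWithinAt ξ (Ici t) t) (hbdd : ∀ t, BddAbove (plateau ξ t)) (t : α) :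
    ContinuousWithinAt (plateauEnd ξ) (Ici t) t :=
  (hξ.monotone_plateauEnd hbdd).continuousWithinAt_Ici_of_exists_lt fun _ hb =>
    hξ.exists_plateauEnd_lt (hrc t) (hbdd t) hb

end Plateau

/-- For non-decreasing right-continuous `ξ` with `ξ(∞-) = ∞`, the waiting-time functional
`𝒟(ξ)(t) := sup{s ≥ t : ξ(s) = ξ(t)}` is finite (the set is bounded above), non-decreasing
and right-continuous, i.e. `𝒟(ξ) ∈ D_{↑,∞}`. -/
theorem stmt13 (ξ : ℝ → ℝ) (hmono : Monotone ξ)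
    (hrc : ∀ x, ContinuousWithinAt ξ (Ici x) x)
    (htop : Tendsto ξ atTop atTop) :
    (∀ t, BddAbove {s : ℝ | t ≤ s ∧ ξ s = ξ t}) ∧
    Monotone (fun t => sSup {s : ℝ | t ≤ s ∧ ξ s = ξ t}) ∧
    ∀ t, ContinuousWithinAt (fun t' => sSup {s : ℝ | t' ≤ s ∧ ξ s = ξ t'}) (Ici t) t :=
  have hbdd := bddAbove_plateau htop
  ⟨hbdd, hmono.monotone_plateauEnd hbdd, hmono.continuousWithinAt_plateauEnd hrc hbdd⟩
end
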